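/- Let α : F → ℝ and define coefficients c_k := 2^{-n} · (∑_{j ∈ F} (-1)^{(k*j)_0} · α_j)² for k ∈ F. Then for every matrix ρ ∈ Matrix F F ℂ: ∑_{j ∈ F} ∑_{k ∈ F} c_k • (S_{j,k} * ρ * S_{j,k}) = (∑_{j ∈ F} α_j)² • ρ + 2^n • ∑_{k ∈ F, k ≠ 0} c_k • ∑_{l ∈ F} ρ_{l,l} • E_{l+k, l+k}. -/

import Mathlib

variable {n : ℕ} [NeZero n] {F : Type*} [Field F] [Fintype F] [DecidableEq F]
  [Algebra (ZMod 2) F]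

/-- The phase operator `Ẑ_a`: the diagonal matrix with `(Ẑ_a)_{k,k} = (-1)^{(k*a)_0}`. -/
noncomputable def phaseZ (b : Module.Basis (Fin n) (ZMod 2) F) (a : F) : Matrix F F ℂ :=
  Matrix.diagonal fun k => (-1 : ℂ) ^ ((b.repr (k * a)) 0).val

/-- The shift operator `X̂_a`: `(X̂_a)_{k,l} = 1` if `l = k + a` and `0` otherwise. -/
def shiftX (a : F) : Matrix F F ℂ :=
  fun k l => if l = k + a then 1 else 0

/-- `ν(x) = ∑_{i<n} (x_i).val * 2^i`. -/
noncomputable def nu (b : Module.Basis (Fin n) (ZMod 2) F) (x : F) : ℕ :=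
  ∑ i : Fin n, ((b.repr x) i).val * 2 ^ i.val

/-- The phase factor `s_{j,k} := ∏_{0 ≤ r,t < n} I^{ν(j * (k_r • b r) * (k_t • b t))}`. -/
noncomputable def sFactor (b : Module.Basis (Fin n) (ZMod 2) F) (j k : F) : ℂ :=
  ∏ r : Fin n, ∏ t : Fin n,
    Complex.I ^ nu b (j * ((b.repr k) r • b r) * ((b.repr k) t • b t))

/-- `S_{j,k} := s_{j,k} • (Ẑ_{j*k} * X̂_k)`. -/
noncomputable def Sop (b : Module.Basis (Fin n) (ZMod 2) F) (j k : F) : Matrix F F ℂ :=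
  sFactor b j k • (phaseZ b (j * k) * shiftX k)

set_option linter.unusedSectionVars false

lemma neg_one_pow_congr' {m m' : ℕ} (h : m % 2 = m' % 2) : (-1 : ℂ) ^ m = (-1) ^ m' := by
  rcases Nat.even_or_odd m with he | ho
  · have he' : Even m' := by rw [Nat.even_iff] at he ⊢; omega
    rw [he.neg_one_pow, he'.neg_one_pow]
  · have ho' : Odd m' := by rw [Nat.odd_iff] at ho ⊢; omega
    rw [ho.neg_one_pow, ho'.neg_one_pow]

noncomputable def chi (b : Module.Basis (Fin n) (ZMod 2) F) (x : F) : ℂ :=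
  (-1) ^ ((b.repr x) 0).val

lemma chi_add (b : Module.Basis (Fin n) (ZMod 2) F) (x y : F) :
    chi b (x + y) = chi b x * chi b y := by
  unfold chi
  rw [map_add, Finsupp.add_apply, ← pow_add]
  exact neg_one_pow_congr' (by rw [ZMod.val_add]; omega)

lemma chi_sum (b : Module.Basis (Fin n) (ZMod 2) F) {ι : Type*} (s : Finset ι) (f : ι → F) :
    chi b (∑ i ∈ s, f i) = ∏ i ∈ s, chi b (f i) := by
  induction s using Finset.cons_induction with
  | empty => simp [chi]
  | cons a s ha ih => rw [Finset.sum_cons, Finset.prod_cons, chi_add, ih]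

lemma nu_mod_two (b : Module.Basis (Fin n) (ZMod 2) F) (x : F) :
    nu b x % 2 = ((b.repr x) 0).val % 2 := by
  unfold nu
  rw [Finset.sum_nat_mod]
  rw [Finset.sum_eq_single (0 : Fin n)]
  · simp
  · intro i _ hi
    have : i.val ≠ 0 := fun h => hi (Fin.ext h)
    have h2 : 2 ∣ 2 ^ i.val := dvd_pow_self 2 this
    have h3 : 2 ∣ ((b.repr x) i).val * 2 ^ i.val := h2.mul_left _
    omega
  · simp

lemma neg_one_pow_nu (b : Module.Basis (Fin n) (ZMod 2) F) (x : F) :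
    (-1 : ℂ) ^ (nu b x) = chi b x :=
  neg_one_pow_congr' (by rw [nu_mod_two])

lemma sFactor_sq (b : Module.Basis (Fin n) (ZMod 2) F) (j k : F) :
    (sFactor b j k) ^ 2 = chi b (j * k * k) := by
  unfold sFactor
  rw [← Finset.prod_pow]
  simp_rw [← Finset.prod_pow, ← pow_mul, mul_comm (nu b _) 2, pow_mul, Complex.I_sq,
    neg_one_pow_nu, ← chi_sum]
  congr 1
  simp_rw [← Finset.mul_sum]
  rw [Module.Basis.sum_repr, ← Finset.sum_mul, ← Finset.mul_sum, Module.Basis.sum_repr, mul_assoc]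

omit [NeZero n] [Fintype F] [DecidableEq F] in
lemma char2 (x : F) : x + x = 0 := by
  have h := map_add (algebraMap (ZMod 2) F) 1 1
  rw [show ((1 : ZMod 2) + 1) = 0 from by decide, map_zero, map_one] at h
  have hx : x + x = (1 + 1) * x := by ring
  rw [hx, ← h, zero_mul]

lemma chi_b0 (b : Module.Basis (Fin n) (ZMod 2) F) : chi b (b 0) = -1 := by
  unfold chi
  rw [b.repr_self, Finsupp.single_eq_same]
  norm_num [ZMod.val_one]

lemma sum_chi (b : Module.Basis (Fin n) (ZMod 2) F) : ∑ x : F, chi b x = 0 := by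
  have h1 : ∀ x : F, chi b (x + b 0) = - chi b x := by
    intro x; rw [chi_add, chi_b0]; ring
  have h2 : ∑ x : F, chi b (x + b 0) = ∑ x : F, chi b x :=
    Fintype.sum_equiv (Equiv.addRight (b 0)) _ _ (fun x => rfl)
  simp_rw [h1, Finset.sum_neg_distrib] at h2
  exact neg_eq_self.mp h2

lemma charSum (hF : Fintype.card F = 2 ^ n) (b : Module.Basis (Fin n) (ZMod 2) F) (a : F) :
    ∑ j : F, chi b (j * a) = if a = 0 then ((2 : ℂ) ^ n) else 0 := by
  by_cases ha : a = 0
  · subst ha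
    simp only [mul_zero, if_pos rfl]
    rw [show chi b 0 = 1 from by simp [chi], Finset.sum_const, Finset.card_univ, hF]
    push_cast; ring
  · rw [if_neg ha]
    have := Fintype.sum_equiv (Equiv.mulRight₀ a ha) (fun j => chi b (j * a)) (chi b)
      (fun x => rfl)
    rw [this, sum_chi]

lemma conj_apply (b : Module.Basis (Fin n) (ZMod 2) F) (j k : F) (ρ : Matrix F F ℂ) (p q : F) :
    (Sop b j k * ρ * Sop b j k) p q = chi b (j * k * (p + q)) * ρ (p + k) (q + k) := by
  have hstep : Sop b j k * ρ * Sop b j k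
      = (sFactor b j k) ^ 2 •
        ((phaseZ b (j * k) * shiftX k) * ρ * (phaseZ b (j * k) * shiftX k)) := by
    simp [Sop, Matrix.smul_mul, Matrix.mul_smul, smul_smul, sq]
  rw [hstep, Matrix.smul_apply, sFactor_sq, smul_eq_mul]
  have hZX : ∀ m l : F, (phaseZ b (j * k) * shiftX k) m l
      = if l = m + k then chi b (m * (j * k)) else 0 := by
    intro m l
    simp [phaseZ, shiftX, Matrix.diagonal_mul, chi, mul_ite]
  have hmid : ∀ l' : F, (phaseZ b (j * k) * shiftX k * ρ) p l'
      = chi b (p * (j * k)) * ρ (p + k) l' := by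
    intro l'
    rw [Matrix.mul_apply]
    simp_rw [hZX, ite_mul, zero_mul]
    rw [Finset.sum_ite_eq' Finset.univ (p + k) (fun l => chi b (p * (j*k)) * ρ l l')]
    simp
  rw [Matrix.mul_apply]
  simp_rw [hmid]
  have hiff : ∀ l' : F, (q = l' + k) ↔ (l' = q + k) := by
    intro l'
    constructor
    · intro h; rw [h, add_assoc, char2, add_zero]
    · intro h; rw [h, add_assoc, char2, add_zero]
  simp_rw [hZX, hiff, mul_ite, mul_zero]
  rw [Finset.sum_ite_eq' Finset.univ (q + k)
    (fun l' => chi b (p * (j*k)) * ρ (p+k) l' * chi b (l' * (j*k)))]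
  simp only [Finset.mem_univ, if_pos]
  rw [← mul_assoc, mul_comm (chi b (j*k*k)) _, mul_assoc, mul_assoc,
    mul_comm (ρ (p+k) (q+k)) _, ← chi_add, ← mul_assoc, ← chi_add]
  congr 2
  have h : p * (j * k) + (j * k * k + (q + k) * (j * k))
      = j * k * (p + q) + (j * k * k + j * k * k) := by ring
  rw [h, char2, add_zero]

/-- With `c_k := 2^{-n} (∑_{j ∈ F} (-1)^{(k*j)_0} α_j)²`, for every
matrix `ρ`:
`∑_{j ∈ F} ∑_{k ∈ F} c_k • (S_{j,k} * ρ * S_{j,k})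
  = (∑_j α_j)² • ρ + 2^n • ∑_{k ≠ 0} c_k • ∑_{l ∈ F} ρ_{l,l} • E_{l+k, l+k}`. -/
theorem stmt_11 (hF : Fintype.card F = 2 ^ n) (b : Module.Basis (Fin n) (ZMod 2) F)
    (α : F → ℝ) (c : F → ℝ)
    (hc : ∀ k : F, c k =
      ((2 : ℝ) ^ n)⁻¹ * (∑ j : F, (-1 : ℝ) ^ ((b.repr (k * j)) 0).val * α j) ^ 2)
    (ρ : Matrix F F ℂ) :
    ∑ j : F, ∑ k : F, c k • (Sop b j k * ρ * Sop b j k) =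
      ((∑ j : F, α j) ^ 2) • ρ +
        ((2 : ℝ) ^ n) • ∑ k ∈ Finset.univ \ {(0 : F)},
          c k • ∑ l : F, ρ l l • Matrix.single (l + k) (l + k) (1 : ℂ) := by
  have h2n : ((2 : ℝ) ^ n) ≠ 0 := by positivity
  have hc0 : ((∑ j : F, α j) ^ 2 : ℝ) = 2 ^ n * c 0 := by
    rw [hc 0]
    have hv : ∀ j : F, ((b.repr ((0 : F) * j)) 0).val = 0 := by
      intro j; simp
    simp_rw [hv, pow_zero, one_mul]
    field_simp
  ext p q
  have hLHS : (∑ j : F, ∑ k : F, c k • (Sop b j k * ρ * Sop b j k)) p q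
      = ∑ k : F, (if k * (p + q) = 0 then (2 : ℂ) ^ n else 0)
          * ((c k : ℂ) * ρ (p + k) (q + k)) := by
    simp_rw [Matrix.sum_apply, Matrix.smul_apply, conj_apply, Complex.real_smul]
    rw [Finset.sum_comm]
    refine Finset.sum_congr rfl fun k _ => ?_
    rw [← charSum hF b (k * (p + q)), Finset.sum_mul]
    refine Finset.sum_congr rfl fun j _ => ?_
    rw [mul_assoc j k]
    ring
  rw [hLHS, Matrix.add_apply, Matrix.smul_apply, Matrix.smul_apply]
  have hstd : ∀ (i j u v : F), Matrix.single i j (1 : ℂ) u v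
      = if i = u ∧ j = v then 1 else 0 := fun _ _ _ _ => rfl
  simp only [Matrix.sum_apply, Matrix.smul_apply]
  simp_rw [hstd]
  simp_rw [Complex.real_smul, smul_eq_mul]
  by_cases hpq : p = q
  · subst hpq
    simp only [char2 p, mul_zero, eq_self_iff_true, if_true]
    have hcond : ∀ l k : F, ((l + k = p ∧ l + k = p) ↔ (l = p + k)) := by
      intro l k
      constructor
      · rintro ⟨h, -⟩; rw [← h, add_assoc, char2, add_zero]
      · intro h; constructor <;> rw [h, add_assoc, char2, add_zero]
    simp_rw [if_congr (hcond _ _) rfl rfl, mul_ite, mul_one, mul_zero]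
    simp only [Finset.sum_ite_eq', Finset.mem_univ, if_true]
    rw [show (Finset.univ \ {(0 : F)}) = Finset.univ.erase 0 by
      rw [Finset.sdiff_singleton_eq_erase]]
    rw [← Finset.add_sum_erase Finset.univ
      (fun k => (2 : ℂ) ^ n * ((c k : ℂ) * ρ (p + k) (p + k))) (Finset.mem_univ 0)]
    rw [hc0]
    push_cast
    rw [Finset.mul_sum]
    simp only [add_zero]
    ring
  · have hpq0 : p + q ≠ 0 := by
      intro h
      apply hpq
      have h2 : p + q + q = 0 + q := by rw [h]
      rwa [add_assoc, char2, add_zero, zero_add] at h2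
    simp_rw [mul_eq_zero, or_iff_left hpq0, ite_mul, zero_mul]
    rw [Finset.sum_ite_eq' Finset.univ 0
      (fun k => (2 : ℂ) ^ n * ((c k : ℂ) * ρ (p + k) (q + k))), if_pos (Finset.mem_univ 0)]
    have hzero : ∀ k l : F, (if l + k = p ∧ l + k = q then (1 : ℂ) else 0) = 0 := by
      intro k l
      rw [if_neg]
      rintro ⟨h1, h2⟩
      exact hpq (h1 ▸ h2 ▸ rfl)
    simp only [hzero, mul_zero, Finset.sum_const_zero, smul_zero, add_zero]
    rw [hc0]
    push_cast
    ring
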